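/- arXiv:2308.15147 — 2 statements merged into one kernel-verified Lean document; each statement's English description precedes it below -/
import Mathlib

section
/- Let K₁ and K₂ be isotropic subspaces of (E, B) and let R = {(q₁(e), q₂(e)) : e ∈ K₁^⊥ ∩ K₂^⊥} ⊆ (K₁^⊥/K₁) × (K₂^⊥/K₂). Then R equals its own orthogonal complement with respect to the nondegenerate symmetric bilinear form ((x₁, x₂), (y₁, y₂)) ↦ B̄₁(x₁, y₁) − B̄₂(x₂, y₂); in particular R is maximally isotropic (a linear Dirac structure) and dim R = dim E − dim K₁ − dim K₂. -/
/-- The orthogonal complement `K^⊥` of a subspace `K` with respect to `B`. -/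
noncomputable def orthB {E : Type*} [AddCommGroup E] [Module ℝ E]
    (B : LinearMap.BilinForm ℝ E) (K : Submodule ℝ E) : Submodule ℝ E :=
  LinearMap.BilinForm.orthogonal B K
/-- An isotropic `K`, regarded as a submodule of `K^⊥`. -/
noncomputable def Ksub {E : Type*} [AddCommGroup E] [Module ℝ E]
    (B : LinearMap.BilinForm ℝ E) (K : Submodule ℝ E) : Submodule ℝ ↥(orthB B K) :=
  Submodule.comap (orthB B K).subtype K

/-- The reduced space `K^⊥/K`. -/
abbrev Red {E : Type*} [AddCommGroup E] [Module ℝ E]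
    (B : LinearMap.BilinForm ℝ E) (K : Submodule ℝ E) :=
  ↥(orthB B K) ⧸ Ksub B K

/-- The quotient map `q : K^⊥ → K^⊥/K`. -/
noncomputable def qmap {E : Type*} [AddCommGroup E] [Module ℝ E]
    (B : LinearMap.BilinForm ℝ E) (K : Submodule ℝ E) :
    ↥(orthB B K) →ₗ[ℝ] Red B K :=
  (Ksub B K).mkQ
/-- The map `L : K₁^⊥ ∩ K₂^⊥ → (K₁^⊥/K₁) × (K₂^⊥/K₂)`, `e ↦ (q₁(e), q₂(e))`. -/
noncomputable def Lmap {E : Type*} [AddCommGroup E] [Module ℝ E]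
    (B : LinearMap.BilinForm ℝ E) (K₁ K₂ : Submodule ℝ E) :
    ↥(orthB B K₁ ⊓ orthB B K₂) →ₗ[ℝ] Red B K₁ × Red B K₂ :=
  LinearMap.prod
    (qmap B K₁ ∘ₗ Submodule.inclusion inf_le_left)
    (qmap B K₂ ∘ₗ Submodule.inclusion inf_le_right)

/-!
`R` is the image of `K₁^⊥ ∩ K₂^⊥ = (K₁ + K₂)^⊥` under `e ↦ (q₁ e, q₂ e)`, whose kernel is
`K₁ ∩ K₂`; hence `dim R = (n - dim (K₁ + K₂)) - dim (K₁ ∩ K₂) = n - k₁ - k₂`. It is isotropic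
because both components of the difference pairing equal `B(e, e')`, and the ambient space
`K₁^⊥/K₁ × K₂^⊥/K₂` has dimension `(n - 2k₁) + (n - 2k₂) = 2 dim R`. The difference pairing is
nondegenerate because each reduced pairing is (an element of `K^⊥` orthogonal to `K^⊥` lies in
`K^⊥⊥ = K`), so the half-dimensional isotropic subspace `R` is its own orthogonal.
-/

open Module Submodule
open LinearMap (BilinForm)

namespace LinearMap.BilinForm

theorem nondegenerate_compl₁₂_fst_sub_compl₁₂_snd {R M₁ M₂ : Type*} [CommRing R]
    [AddCommGroup M₁] [Module R M₁] [AddCommGroup M₂] [Module R M₂]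
    {B₁ : BilinForm R M₁} {B₂ : BilinForm R M₂} (hB₁ : B₁.Nondegenerate)
    (hB₂ : B₂.Nondegenerate) :
    (B₁.compl₁₂ (fst R M₁ M₂) (fst R M₁ M₂) - B₂.compl₁₂ (snd R M₁ M₂) (snd R M₁ M₂)
      ).Nondegenerate := by
  refine ⟨fun x hx => Prod.ext ?_ ?_, fun y hy => Prod.ext ?_ ?_⟩
  · exact hB₁.1 _ fun y => by simpa using hx (y, 0)
  · exact hB₂.1 _ fun y => by simpa using hx (0, y)
  · exact hB₁.2 _ fun x => by simpa using hy (x, 0)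
  · exact hB₂.2 _ fun x => by simpa using hy (0, x)

theorem orthogonal_eq_of_le_orthogonal_of_finrank_le {K V : Type*} [Field K] [AddCommGroup V]
    [Module K V] [FiniteDimensional K V] {Q : BilinForm K V} (hQ : Q.Nondegenerate)
    {W : Submodule K V} (hW : W ≤ Q.orthogonal W) (hdim : finrank K V ≤ 2 * finrank K W) :
    Q.orthogonal W = W := by
  refine (eq_of_le_of_finrank_le hW ?_).symm
  rw [finrank_orthogonal hQ]
  omega

theorem orthogonal_sup {R M : Type*} [CommRing R] [AddCommGroup M] [Module R M]
    (B : BilinForm R M) (N₁ N₂ : Submodule R M) :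
    B.orthogonal (N₁ ⊔ N₂) = B.orthogonal N₁ ⊓ B.orthogonal N₂ := by
  refine le_antisymm (le_inf (orthogonal_le le_sup_left) (orthogonal_le le_sup_right)) ?_
  rintro v ⟨hv₁, hv₂⟩ _ hm
  obtain ⟨a, ha, b, hb, rfl⟩ := mem_sup.mp hm
  show B (a + b) v = 0
  rw [map_add, LinearMap.add_apply, hv₁ a ha, hv₂ b hb, add_zero]

end LinearMap.BilinForm

section Reduction

variable {E : Type*} [AddCommGroup E] [Module ℝ E] {B : BilinForm ℝ E} {K : Submodule ℝ E}

theorem qmap_eq_zero_iff (e : orthB B K) : qmap B K e = 0 ↔ (e : E) ∈ K :=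
  Quotient.mk_eq_zero _

theorem finrank_Red_add_two_mul_finrank [FiniteDimensional ℝ E] (hB : B.Nondegenerate)
    (hK : K ≤ orthB B K) : finrank ℝ (Red B K) + 2 * finrank ℝ K = finrank ℝ E := by
  have hquot : finrank ℝ (Red B K) + finrank ℝ (Ksub B K) = finrank ℝ (orthB B K) :=
    (Ksub B K).finrank_quotient_add_finrank
  have hperp : finrank ℝ (orthB B K) = finrank ℝ E - finrank ℝ K :=
    BilinForm.finrank_orthogonal hB K
  have hKsub : finrank ℝ (Ksub B K) = finrank ℝ K := (comapSubtypeEquivOfLe hK).finrank_eq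
  rw [hKsub, hperp] at hquot
  have hle : finrank ℝ K ≤ finrank ℝ E - finrank ℝ K := hperp ▸ finrank_mono hK
  omega

variable {Bbar : BilinForm ℝ (Red B K)}

theorem isSymm_of_qmap (hBbar : ∀ e e' : orthB B K, Bbar (qmap B K e) (qmap B K e') = B e e')
    (hB : B.IsSymm) : Bbar.IsSymm := by
  refine ⟨fun x y => ?_⟩
  obtain ⟨e, rfl⟩ := (Ksub B K).mkQ_surjective x
  obtain ⟨e', rfl⟩ := (Ksub B K).mkQ_surjective y
  exact (hBbar e e').trans ((hB.eq _ _).trans (hBbar e' e).symm)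

theorem nondegenerate_of_qmap [FiniteDimensional ℝ E]
    (hBbar : ∀ e e' : orthB B K, Bbar (qmap B K e) (qmap B K e') = B e e')
    (hB : B.IsSymm) (hBnd : B.Nondegenerate) : Bbar.Nondegenerate := by
  refine (isSymm_of_qmap hBbar hB).isRefl.nondegenerate_iff_separatingLeft.mpr fun x hx => ?_
  obtain ⟨e, rfl⟩ := (Ksub B K).mkQ_surjective x
  have he : (e : E) ∈ B.orthogonal (B.orthogonal K) := fun n hn => by
    change B n e = 0
    rw [hB.eq, ← hBbar e ⟨n, hn⟩]
    exact hx _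
  rw [BilinForm.orthogonal_orthogonal hBnd hB.isRefl] at he
  exact (qmap_eq_zero_iff e).mpr he

end Reduction

section TDuality

variable {E : Type*} [AddCommGroup E] [Module ℝ E] {B : BilinForm ℝ E} {K₁ K₂ : Submodule ℝ E}

theorem ker_Lmap :
    LinearMap.ker (Lmap B K₁ K₂) = comap (orthB B K₁ ⊓ orthB B K₂).subtype (K₁ ⊓ K₂) := by
  ext e
  change (qmap B K₁ _, qmap B K₂ _) = 0 ↔ _
  rw [Prod.mk_eq_zero, qmap_eq_zero_iff, qmap_eq_zero_iff]
  rfl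

theorem finrank_range_Lmap_add_finrank_add_finrank [FiniteDimensional ℝ E] (hB : B.Nondegenerate)
    (hK₁ : K₁ ≤ orthB B K₁) (hK₂ : K₂ ≤ orthB B K₂) :
    finrank ℝ (LinearMap.range (Lmap B K₁ K₂)) + finrank ℝ K₁ + finrank ℝ K₂
      = finrank ℝ E := by
  have hrank := (Lmap B K₁ K₂).finrank_range_add_finrank_ker
  have hperp : finrank ℝ ↥(orthB B K₁ ⊓ orthB B K₂) = finrank ℝ E - finrank ℝ ↥(K₁ ⊔ K₂) := by
    rw [orthB, orthB, ← BilinForm.orthogonal_sup, BilinForm.finrank_orthogonal hB]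
  rw [ker_Lmap, (comapSubtypeEquivOfLe (inf_le_inf hK₁ hK₂)).finrank_eq, hperp] at hrank
  have hsup := finrank_sup_add_finrank_inf_eq K₁ K₂
  have hle : finrank ℝ ↥(K₁ ⊔ K₂) ≤ finrank ℝ E := Submodule.finrank_le _
  omega

theorem range_Lmap_le_orthogonal {Bbar₁ : BilinForm ℝ (Red B K₁)}
    (hBbar₁ : ∀ e e' : orthB B K₁, Bbar₁ (qmap B K₁ e) (qmap B K₁ e') = B e e')
    {Bbar₂ : BilinForm ℝ (Red B K₂)}
    (hBbar₂ : ∀ e e' : orthB B K₂, Bbar₂ (qmap B K₂ e) (qmap B K₂ e') = B e e') :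
    LinearMap.range (Lmap B K₁ K₂) ≤
      BilinForm.orthogonal (Bbar₁.compl₁₂ (LinearMap.fst ℝ _ _) (LinearMap.fst ℝ _ _)
        - Bbar₂.compl₁₂ (LinearMap.snd ℝ _ _) (LinearMap.snd ℝ _ _))
        (LinearMap.range (Lmap B K₁ K₂)) := by
  rintro _ ⟨e, rfl⟩ _ ⟨e', rfl⟩
  show Bbar₁ (qmap B K₁ _) (qmap B K₁ _) - Bbar₂ (qmap B K₂ _) (qmap B K₂ _) = 0
  rw [hBbar₁, hBbar₂]
  exact sub_self _

end TDuality

/-- The fibrewise T-duality relation `R = {(q₁(e), q₂(e)) : e ∈ K₁^⊥ ∩ K₂^⊥}` equals its own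
orthogonal complement with respect to the difference of the reduced pairings; in particular it
is maximally isotropic, of dimension `dim E − dim K₁ − dim K₂`. -/
theorem stmt11 (E : Type*) [AddCommGroup E] [Module ℝ E] [FiniteDimensional ℝ E]
    (B : LinearMap.BilinForm ℝ E)
    (hBsymm : ∀ e e', B e e' = B e' e)
    (hBnd : LinearMap.BilinForm.Nondegenerate B)
    (K₁ K₂ : Submodule ℝ E)
    (hK₁ : K₁ ≤ orthB B K₁) (hK₂ : K₂ ≤ orthB B K₂)
    (Bbar₁ : LinearMap.BilinForm ℝ (Red B K₁))
    (hBbar₁ : ∀ e e' : ↥(orthB B K₁),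
      Bbar₁ (qmap B K₁ e) (qmap B K₁ e') = B (e : E) (e' : E))
    (Bbar₂ : LinearMap.BilinForm ℝ (Red B K₂))
    (hBbar₂ : ∀ e e' : ↥(orthB B K₂),
      Bbar₂ (qmap B K₂ e) (qmap B K₂ e') = B (e : E) (e' : E)) :
    LinearMap.BilinForm.orthogonal
        (LinearMap.compl₁₂ Bbar₁ (LinearMap.fst ℝ (Red B K₁) (Red B K₂))
            (LinearMap.fst ℝ (Red B K₁) (Red B K₂))
          - LinearMap.compl₁₂ Bbar₂ (LinearMap.snd ℝ (Red B K₁) (Red B K₂))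
            (LinearMap.snd ℝ (Red B K₁) (Red B K₂)))
        (LinearMap.range (Lmap B K₁ K₂))
      = LinearMap.range (Lmap B K₁ K₂) ∧
    (Module.finrank ℝ ↥(LinearMap.range (Lmap B K₁ K₂)) : ℤ)
      = (Module.finrank ℝ E : ℤ) - (Module.finrank ℝ ↥K₁ : ℤ)
        - (Module.finrank ℝ ↥K₂ : ℤ) := by
  have hB : B.IsSymm := ⟨hBsymm⟩
  have hR := finrank_range_Lmap_add_finrank_add_finrank hBnd hK₁ hK₂
  have hRed₁ := finrank_Red_add_two_mul_finrank hBnd hK₁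
  have hRed₂ := finrank_Red_add_two_mul_finrank hBnd hK₂
  refine ⟨BilinForm.orthogonal_eq_of_le_orthogonal_of_finrank_le
    (BilinForm.nondegenerate_compl₁₂_fst_sub_compl₁₂_snd
      (nondegenerate_of_qmap hBbar₁ hB hBnd) (nondegenerate_of_qmap hBbar₂ hB hBnd))
    (range_Lmap_le_orthogonal hBbar₁ hBbar₂) ?_, by omega⟩
  rw [finrank_prod]
  omega
end

section
/- Let V₁ and V₂ be finite-dimensional real vector spaces, φ : V₁ → V₂ a linear isomorphism, and Φ : 𝕋V₁ → 𝕋V₂ a linear isomorphism satisfying ⟨Φ(x), Φ(y)⟩ = ⟨x, y⟩ for all x, y ∈ 𝕋V₁ (isometry of the hyperbolic pairings) and pr₁(Φ(x)) = φ(pr₁(x)) for all x ∈ 𝕋V₁ (compatibility with the anchors). Then there exists a unique alternating bilinear form B on V₁ such that Φ(v, α) = (φ(v), (α + B(v, ·)) ∘ φ⁻¹) for all (v, α) ∈ 𝕋V₁; that is, Φ = φ̄ ∘ e^B is the composition of the B-field transformation e^B(v, α) = (v, α + B(v, ·)) with the induced map φ̄(v, α) = (φ(v), α ∘ φ⁻¹).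 -/
/-- The hyperbolic pairing on the double `𝕋V = V × V*`:
`⟨(v, α), (w, β)⟩ = α(w) + β(v)`. -/
noncomputable def hyp (V : Type*) [AddCommGroup V] [Module ℝ V] :
    LinearMap.BilinForm ℝ (V × Module.Dual ℝ V) :=
  LinearMap.mk₂ ℝ (fun x y => x.2 y.1 + y.2 x.1)
    (fun x x' y => by
      simp only [Prod.fst_add, Prod.snd_add, LinearMap.add_apply, map_add]; ring)
    (fun c x y => by
      simp only [Prod.smul_fst, Prod.smul_snd, LinearMap.smul_apply, map_smul, smul_eq_mul]; ring)
    (fun x y y' => by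
      simp only [Prod.fst_add, Prod.snd_add, LinearMap.add_apply, map_add]; ring)
    (fun c x y => by
      simp only [Prod.smul_fst, Prod.smul_snd, LinearMap.smul_apply, map_smul, smul_eq_mul]; ring)

/-!
The form is read off from `Φ` on `V₁ × {0}`: `B v w := (Φ (v, 0)).2 (φ w)`. Pairing `(v, α)` with
`(w, 0)` and using isometry together with the anchor condition gives
`(Φ (v, α)).2 (φ w) = α w + B v w`, which is the factorisation; pairing `(v, 0)` with `(w, 0)`
gives `B v w + B w v = 0`, so `B` is alternating. Conversely the factorisation at `α = 0` forces
this formula for `B`.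
-/

@[simp]
theorem hyp_apply {V : Type*} [AddCommGroup V] [Module ℝ V] (x y : V × Module.Dual ℝ V) :
    hyp V x y = x.2 y.1 + y.2 x.1 :=
  rfl

section BField

variable {R V₁ V₂ : Type*} [CommSemiring R] [AddCommMonoid V₁] [Module R V₁]
  [AddCommMonoid V₂] [Module R V₂]

def bField (φ : V₁ →ₗ[R] V₂) (Φ : V₁ × Module.Dual R V₁ →ₗ[R] V₂ × Module.Dual R V₂) :
    LinearMap.BilinForm R V₁ :=
  φ.dualMap ∘ₗ LinearMap.snd R V₂ (Module.Dual R V₂) ∘ₗ Φ ∘ₗ LinearMap.inl R V₁ (Module.Dual R V₁)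

@[simp]
theorem bField_apply (φ : V₁ →ₗ[R] V₂) (Φ : V₁ × Module.Dual R V₁ →ₗ[R] V₂ × Module.Dual R V₂)
    (v w : V₁) : bField φ Φ v w = (Φ (v, 0)).2 (φ w) :=
  rfl

theorem eq_bField_of_forall_apply_eq (φ : V₁ ≃ₗ[R] V₂)
    (Φ : V₁ × Module.Dual R V₁ →ₗ[R] V₂ × Module.Dual R V₂) (B : LinearMap.BilinForm R V₁)
    (hB : ∀ v α, Φ (v, α) = (φ v, (α + B v) ∘ₗ (φ.symm : V₂ →ₗ[R] V₁))) :
    B = bField φ Φ := by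
  ext v w
  simp [hB]

end BField

section Isometry

variable {V₁ V₂ : Type*} [AddCommGroup V₁] [Module ℝ V₁] [AddCommGroup V₂] [Module ℝ V₂]
  {φ : V₁ →ₗ[ℝ] V₂} {Φ : V₁ × Module.Dual ℝ V₁ →ₗ[ℝ] V₂ × Module.Dual ℝ V₂}

theorem bField_add_bField_swap (hisom : ∀ x y, hyp V₂ (Φ x) (Φ y) = hyp V₁ x y)
    (hanch : ∀ x, (Φ x).1 = φ x.1) (v w : V₁) :
    bField φ Φ v w + bField φ Φ w v = 0 := by
  simpa [hanch] using hisom (v, 0) (w, 0)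

theorem bField_self (hisom : ∀ x y, hyp V₂ (Φ x) (Φ y) = hyp V₁ x y)
    (hanch : ∀ x, (Φ x).1 = φ x.1) (v : V₁) : bField φ Φ v v = 0 := by
  linarith [bField_add_bField_swap hisom hanch v v]

theorem snd_apply_eq_add_bField (hisom : ∀ x y, hyp V₂ (Φ x) (Φ y) = hyp V₁ x y)
    (hanch : ∀ x, (Φ x).1 = φ x.1) (v : V₁) (α : Module.Dual ℝ V₁) (w : V₁) :
    (Φ (v, α)).2 (φ w) = α w + bField φ Φ v w := by
  have hpair : (Φ (v, α)).2 (φ w) + (Φ (w, 0)).2 (φ v) = α w := by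
    simpa [hanch] using hisom (v, α) (w, 0)
  have hskew := bField_add_bField_swap hisom hanch v w
  simp only [bField_apply] at hskew ⊢
  linarith

end Isometry

theorem apply_eq_bField {V₁ V₂ : Type*} [AddCommGroup V₁] [Module ℝ V₁] [AddCommGroup V₂]
    [Module ℝ V₂] {φ : V₁ ≃ₗ[ℝ] V₂} {Φ : V₁ × Module.Dual ℝ V₁ →ₗ[ℝ] V₂ × Module.Dual ℝ V₂}
    (hisom : ∀ x y, hyp V₂ (Φ x) (Φ y) = hyp V₁ x y) (hanch : ∀ x, (Φ x).1 = φ x.1)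
    (v : V₁) (α : Module.Dual ℝ V₁) :
    Φ (v, α) = (φ v, (α + bField (φ : V₁ →ₗ[ℝ] V₂) Φ v) ∘ₗ (φ.symm : V₂ →ₗ[ℝ] V₁)) := by
  refine Prod.ext (hanch (v, α)) (LinearMap.ext fun u => ?_)
  obtain ⟨w, rfl⟩ := φ.surjective u
  simpa using snd_apply_eq_add_bField hisom hanch v α w

theorem stmt13_general (V₁ V₂ : Type*) [AddCommGroup V₁] [Module ℝ V₁]
    [AddCommGroup V₂] [Module ℝ V₂]
    (φ : V₁ ≃ₗ[ℝ] V₂)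
    (Φ : (V₁ × Module.Dual ℝ V₁) ≃ₗ[ℝ] (V₂ × Module.Dual ℝ V₂))
    (hisom : ∀ x y : V₁ × Module.Dual ℝ V₁, hyp V₂ (Φ x) (Φ y) = hyp V₁ x y)
    (hanch : ∀ x : V₁ × Module.Dual ℝ V₁, (Φ x).1 = φ x.1) :
    ∃! Bf : LinearMap.BilinForm ℝ V₁,
      (∀ v, Bf v v = 0) ∧
      ∀ (v : V₁) (α : Module.Dual ℝ V₁),
        Φ (v, α) = (φ v, (α + Bf v) ∘ₗ (φ.symm : V₂ →ₗ[ℝ] V₁)) := by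
  refine ⟨bField φ.toLinearMap Φ.toLinearMap,
    ⟨bField_self hisom hanch, apply_eq_bField hisom hanch⟩,
    fun B hB => eq_bField_of_forall_apply_eq φ Φ.toLinearMap B hB.2⟩

/-- An isomorphism `Φ : 𝕋V₁ → 𝕋V₂` which is an isometry of the hyperbolic pairings and is
compatible with the anchors, covering `φ`, factors uniquely as `Φ = φ̄ ∘ e^B` for an alternating
bilinear form `B` on `V₁`. -/
theorem stmt13 (V₁ V₂ : Type*) [AddCommGroup V₁] [Module ℝ V₁] [FiniteDimensional ℝ V₁]
    [AddCommGroup V₂] [Module ℝ V₂] [FiniteDimensional ℝ V₂]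
    (φ : V₁ ≃ₗ[ℝ] V₂)
    (Φ : (V₁ × Module.Dual ℝ V₁) ≃ₗ[ℝ] (V₂ × Module.Dual ℝ V₂))
    (hisom : ∀ x y : V₁ × Module.Dual ℝ V₁, hyp V₂ (Φ x) (Φ y) = hyp V₁ x y)
    (hanch : ∀ x : V₁ × Module.Dual ℝ V₁, (Φ x).1 = φ x.1) :
    ∃! Bf : LinearMap.BilinForm ℝ V₁,
      (∀ v, Bf v v = 0) ∧
      ∀ (v : V₁) (α : Module.Dual ℝ V₁),
        Φ (v, α) = (φ v, (α + Bf v) ∘ₗ (φ.symm : V₂ →ₗ[ℝ] V₁)) :=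
  stmt13_general V₁ V₂ φ Φ hisom hanch
end
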